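/- arXiv:1812.10024 — 2 statements merged into one kernel-verified Lean document; each statement's English description precedes it below -/
import Mathlib

section
/- The equation 3(1+x)/(1+3x) - (1/x)·log(1+3x) = 0 has a solution x = 𝒢 in the open interval (0.60565, 0.60566). Moreover, the function h(x) = (1 + 1/x)·log(1+3x) defined for x > 0 attains a critical point at x = 𝒢, and (2/3)·(1 + 1/𝒢)·log(1 + 3𝒢) < 1.8305. -/
open Real Finset

lemma explow : Real.log 2.81698 < 1.0356665 := by
  rw [show (1.0356665:ℝ) = 1 + 0.0356665 by norm_num]
  have h1 : (2.7182818283 : ℝ) < Real.exp 1 := Real.exp_one_gt_d9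
  have h2 : ∑ i ∈ range 4, (0.0356665:ℝ) ^ i / Nat.factorial i ≤ Real.exp 0.0356665 :=
    Real.sum_le_exp_of_nonneg (by norm_num) 4
  simp [Finset.sum_range_succ] at h2
  norm_num [Nat.factorial] at h2
  have hlt : (2.81698 : ℝ) < Real.exp (1 + 0.0356665) := by
    rw [Real.exp_add]
    nlinarith [Real.exp_pos (0.0356665:ℝ)]
  calc Real.log 2.81698 < Real.log (Real.exp (1 + 0.0356665)) := by
        apply Real.log_lt_log (by norm_num) hlt
    _ = 1 + 0.0356665 := Real.log_exp _

lemma loghigh : 1.0356541 < Real.log 2.81695 := by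
  rw [show (1.0356541:ℝ) = 1 + 0.0356541 by norm_num]
  have h1 : Real.exp 1 < 2.7182818286 := Real.exp_one_lt_d9
  have h2 : Real.exp 0.0356541 ≤ (∑ m ∈ range 4, (0.0356541:ℝ) ^ m / Nat.factorial m) +
      (0.0356541:ℝ) ^ 4 * (4 + 1) / (Nat.factorial 4 * 4) :=
    Real.exp_bound' (by norm_num) (by norm_num) (by norm_num)
  simp [Finset.sum_range_succ] at h2
  norm_num [Nat.factorial] at h2
  have hlt : Real.exp (1 + 0.0356541) < 2.81695 := by
    rw [Real.exp_add]
    nlinarith [Real.exp_pos (0.0356541:ℝ), Real.exp_pos (1:ℝ)]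
  calc (1:ℝ) + 0.0356541 = Real.log (Real.exp (1 + 0.0356541)) := (Real.log_exp _).symm
    _ < Real.log 2.81695 := Real.log_lt_log (Real.exp_pos _) hlt

theorem stmt3 :
    ∃ G : ℝ, G ∈ Set.Ioo (0.60565 : ℝ) 0.60566 ∧
      3 * (1 + G) / (1 + 3 * G) - (1 / G) * Real.log (1 + 3 * G) = 0 ∧
      HasDerivAt (fun x : ℝ => (1 + 1 / x) * Real.log (1 + 3 * x)) 0 G ∧
      (2 / 3) * (1 + 1 / G) * Real.log (1 + 3 * G) < 1.8305 := by
  set f : ℝ → ℝ := fun x => 3 * (1 + x) / (1 + 3 * x) - (1 / x) * Real.log (1 + 3 * x) with hf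
  have hcont : ContinuousOn f (Set.Icc (0.60565:ℝ) 0.60566) := by
    apply ContinuousOn.sub
    · apply ContinuousOn.div (by fun_prop)
      · fun_prop
      · intro x hx
        simp only [Set.mem_Icc] at hx
        nlinarith [hx.1]
    · apply ContinuousOn.mul
      · apply ContinuousOn.div continuousOn_const (by fun_prop)
        intro x hx; simp only [Set.mem_Icc] at hx; nlinarith [hx.1]
      · apply ContinuousOn.log (by fun_prop)
        intro x hx; simp only [Set.mem_Icc] at hx; nlinarith [hx.1]
  have hfa : f 0.60565 < 0 := by
    have := loghigh
    simp only [hf]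
    rw [show (1:ℝ) + 3 * 0.60565 = 2.81695 by norm_num]
    nlinarith
  have hfb : 0 < f 0.60566 := by
    have := explow
    simp only [hf]
    rw [show (1:ℝ) + 3 * 0.60566 = 2.81698 by norm_num]
    nlinarith
  have key := intermediate_value_Ioo (by norm_num : (0.60565:ℝ) ≤ 0.60566) hcont
  have h0 : (0:ℝ) ∈ Set.Ioo (f 0.60565) (f 0.60566) := ⟨hfa, hfb⟩
  obtain ⟨G, hG, hGf⟩ := key h0
  obtain ⟨hG1, hG2⟩ := hG
  have hGpos : (0:ℝ) < G := by linarith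
  have hden : (0:ℝ) < 1 + 3 * G := by linarith
  have hlog : Real.log (1 + 3 * G) = 3 * G * (1 + G) / (1 + 3 * G) := by
    have : 3 * (1 + G) / (1 + 3 * G) = (1 / G) * Real.log (1 + 3 * G) := by
      simp only [hf] at hGf; linarith
    field_simp at this ⊢
    linarith
  refine ⟨G, ⟨hG1, hG2⟩, hGf, ?_, ?_⟩
  · have hd : HasDerivAt (fun x : ℝ => (1 + 1 / x) * Real.log (1 + 3 * x))
        ((-1 / G ^ 2) * Real.log (1 + 3 * G) + (1 + 1 / G) * (3 / (1 + 3 * G))) G := by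
      have h1 : HasDerivAt (fun x : ℝ => 1 + 1 / x) (-1 / G ^ 2) G := by
        simpa [neg_div, one_div] using (hasDerivAt_inv hGpos.ne').const_add 1
      have h2 : HasDerivAt (fun x : ℝ => Real.log (1 + 3 * x)) (3 / (1 + 3 * G)) G := by
        have : HasDerivAt (fun x : ℝ => 1 + 3 * x) 3 G := by
          simpa using ((hasDerivAt_id G).const_mul 3).const_add 1
        simpa using this.log hden.ne'
      exact h1.mul h2
    convert hd using 1
    rw [hlog]
    field_simp
    ring
  · rw [hlog]
    have h1 : (2:ℝ) / 3 * (1 + 1 / G) * (3 * G * (1 + G) / (1 + 3 * G)) =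
        2 * (1 + G) ^ 2 / (1 + 3 * G) := by field_simp; ring
    rw [h1, div_lt_iff₀ hden]
    nlinarith
end

section
/- Let p > k be a prime, Φ ∈ (ℤ/p^kℤ)[X] a polynomial of degree k whose leading coefficient is a unit, and n ∈ ℤ/p^kℤ. Then the congruence Φ(x) ≡ n (mod p^k) has at most k·p^{k-1} solutions x ∈ ℤ/p^kℤ. In particular the number of solutions is O(p^{k-1}) with implied constant k. -/
theorem stmt14 (p k : ℕ) (hp : p.Prime) (hk : 1 ≤ k) (hpk : k < p)
    (Φ : Polynomial (ZMod (p ^ k))) (hdeg : Φ.natDegree = k)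
    (hlead : IsUnit Φ.leadingCoeff) (n : ZMod (p ^ k)) :
    Nat.card {x : ZMod (p ^ k) // Φ.eval x = n} ≤ k * p ^ (k - 1) := by
  haveI : Fact p.Prime := ⟨hp⟩
  haveI : NeZero (p ^ k) := ⟨pow_ne_zero k hp.ne_zero⟩
  have hppos : 0 < p := hp.pos
  have hdvd : p ∣ p ^ k := dvd_pow_self p (by omega)
  set f : ZMod (p ^ k) →+* ZMod p := ZMod.castHom hdvd (ZMod p) with hf
  set g : Polynomial (ZMod p) := (Φ - Polynomial.C n).map f with hg
  have hgdeg : g.natDegree = k := by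
    rw [hg, Polynomial.map_sub, Polynomial.map_C, Polynomial.natDegree_sub_C,
      Polynomial.natDegree_map_of_leadingCoeff_ne_zero _ (hlead.map f).ne_zero, hdeg]
  have hg0 : g ≠ 0 := by
    intro h
    rw [h, Polynomial.natDegree_zero] at hgdeg
    omega
  -- fibers of f have size p^(k-1)
  have fiber_bound : ∀ r : ZMod p,
      (Finset.univ.filter (fun x : ZMod (p ^ k) => f x = r)).card ≤ p ^ (k - 1) := by
    intro r
    have : (Finset.univ.filter (fun x : ZMod (p ^ k) => f x = r)).card
        ≤ (Finset.range (p ^ (k - 1))).card := by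
      apply Finset.card_le_card_of_injOn (fun x => x.val / p)
      · intro x hx
        simp only [Finset.mem_coe, Finset.mem_range]
        have hxlt : x.val < p ^ k := ZMod.val_lt x
        have : p ^ k = p ^ (k - 1) * p := by
          rw [← pow_succ]
          congr 1
          omega
        rw [Nat.div_lt_iff_lt_mul hppos]
        omega
      · intro x hx y hy hxy
        simp only [Finset.coe_filter, Set.mem_setOf_eq] at hx hy
        have hfx : f x = f y := by rw [hx.2, hy.2]
        have hmod : x.val % p = y.val % p := by
          have h1 : ((x.val : ℕ) : ZMod p) = ((y.val : ℕ) : ZMod p) := by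
            rwa [ZMod.natCast_val, ZMod.natCast_val, ← ZMod.castHom_apply (h := hdvd),
              ← ZMod.castHom_apply (h := hdvd)]
          exact (ZMod.natCast_eq_natCast_iff' _ _ _).mp h1
        have : x.val = y.val := by
          have hdiv : x.val / p = y.val / p := hxy
          calc x.val = p * (x.val / p) + x.val % p := (Nat.div_add_mod _ _).symm
            _ = p * (y.val / p) + y.val % p := by rw [hdiv, hmod]
            _ = y.val := Nat.div_add_mod _ _
        exact ZMod.val_injective _ this
    simpa using this
  -- main counting
  classical
  set S : Finset (ZMod (p ^ k)) := Finset.univ.filter (fun x => Φ.eval x = n) with hS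
  have hcard : Nat.card {x : ZMod (p ^ k) // Φ.eval x = n} = S.card := by
    rw [Nat.card_eq_fintype_card, Fintype.card_subtype]
  rw [hcard]
  have himg : S.image (fun x => f x) ⊆ g.roots.toFinset := by
    intro r hr
    simp only [Finset.mem_image, hS, Finset.mem_filter] at hr
    obtain ⟨x, ⟨-, hx⟩, rfl⟩ := hr
    rw [Multiset.mem_toFinset, Polynomial.mem_roots hg0]
    have : g.eval (f x) = f ((Φ - Polynomial.C n).eval x) := by
      rw [hg, Polynomial.eval_map, Polynomial.eval₂_at_apply]
    simp only [Polynomial.IsRoot, this, Polynomial.eval_sub, Polynomial.eval_C, hx,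
      sub_self, map_zero]
  have himgcard : (S.image (fun x => f x)).card ≤ k := by
    calc (S.image (fun x => f x)).card ≤ g.roots.toFinset.card := Finset.card_le_card himg
      _ ≤ Multiset.card g.roots := g.roots.toFinset_card_le
      _ ≤ g.natDegree := Polynomial.card_roots' g
      _ = k := hgdeg
  calc S.card = ∑ r ∈ S.image (fun x => f x), (S.filter (fun x => f x = r)).card :=
        Finset.card_eq_sum_card_image _ _
    _ ≤ ∑ _r ∈ S.image (fun x => f x), p ^ (k - 1) := by
        apply Finset.sum_le_sum
        intro r _
        exact le_trans (Finset.card_le_card (by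
          intro x hx
          simp only [Finset.mem_filter] at hx ⊢
          exact ⟨Finset.mem_univ x, hx.2⟩)) (fiber_bound r)
    _ = (S.image (fun x => f x)).card * p ^ (k - 1) := by rw [Finset.sum_const, smul_eq_mul]
    _ ≤ k * p ^ (k - 1) := Nat.mul_le_mul_right _ himgcard
end
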